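/- Let G=(V,A) be a connected digraph with nonnegative integer arc weights, let 0 ≤ b ≤ c and k ≥ 1 be integers, fix a vertex ordering ν=(v_1,...,v_n) of G, and let φ be the (unique, empty) function from E_n×[k] to {0,1,...,c}. Then χ(E_n, φ, [k]) = ∞ if there is no k[b,c]-DWCP solution on G, and otherwise χ(E_n, φ, [k]) equals the minimum weight of a k[b,c]-DWCP solution on G. -/

import Mathlib

/-!
Statement 11: Let G = (V, A) be a connected digraph with nonnegative integer arc weights,
let 0 ≤ b ≤ c and k ≥ 1 be integers, fix a vertex ordering ν = (v_1, ..., v_n) of G, and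
let φ be the (unique, empty) function from E_n × [k] to {0, ..., c}.  Then
χ(E_n, φ, [k]) = ∞ if there is no k[b,c]-DWCP solution on G, and otherwise
χ(E_n, φ, [k]) equals the minimum weight of a k[b,c]-DWCP solution on G.

The vertex ordering is an equivalence `ν : Fin n ≃ V` (`v_i = ν ⟨i-1⟩`); arc bags `E_i`
and `γ(i)` are finsets of arcs; `χ` is defined, with values in `ℕ∞`, as the infimum of
the weights of witnessing tuples of multisets (`sInf ∅ = ∞`); multisets of arcs are
encoded as multiplicity functions `V × V → ℕ`.
-/

/-- `L` is the arc list of a (possibly empty) closed directed walk in the digraph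
with arc set `A`. -/
def IsClosedWalk {V : Type} (A : Finset (V × V)) (L : List (V × V)) : Prop :=
  (∀ a ∈ L, a ∈ A) ∧ List.Chain' (fun p q => p.2 = q.1) L ∧
    L.getLast?.map Prod.snd = L.head?.map Prod.fst

/-- The underlying undirected (simple) graph of a digraph. -/
def UGraph {V : Type} (A : Finset (V × V)) : SimpleGraph V :=
  SimpleGraph.fromRel (fun u v => (u, v) ∈ A)

/-- Weight of a walk: sum of the weights of all traversed arcs, counted with
multiplicity. -/
def walkWeight {V : Type} (ω : V × V → ℕ) (L : List (V × V)) : ℕ := (L.map ω).sum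

/-- Total weight of a k-tuple of walks. -/
def kWalkWeight {V : Type} (ω : V × V → ℕ) {k : ℕ} (W : Fin k → List (V × V)) : ℕ :=
  ∑ i, walkWeight ω (W i)

/-- A k[b,c]-DWCP solution: `k` non-empty closed directed walks such that every arc of
the digraph is traversed, in total, at least `b` and at most `c` times. -/
def IsDWCP {V : Type} [Fintype V] [DecidableEq V] (A : Finset (V × V)) (b c k : ℕ)
    (W : Fin k → List (V × V)) : Prop :=
  (∀ i, W i ≠ [] ∧ IsClosedWalk A (W i)) ∧
    ∀ a ∈ A, b ≤ (∑ i, (W i).count a) ∧ (∑ i, (W i).count a) ≤ c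

/-- The arc bag `E_i`: arcs of `A` with one endpoint among the first `i` vertices of the
ordering `ν` and the other endpoint among the remaining vertices. -/
def Ebag {V : Type} [DecidableEq V] {n : ℕ} (A : Finset (V × V)) (ν : Fin n ≃ V)
    (i : ℕ) : Finset (V × V) :=
  A.filter (fun a =>
    (((ν.symm a.1 : ℕ) < i ∧ i ≤ (ν.symm a.2 : ℕ)) ∨
      ((ν.symm a.2 : ℕ) < i ∧ i ≤ (ν.symm a.1 : ℕ))))

/-- `γ(i) = E_0 ∪ E_1 ∪ ... ∪ E_i`: the arcs of `A` with at least one endpoint among the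
first `i` vertices of the ordering `ν`. -/
def gam {V : Type} [DecidableEq V] {n : ℕ} (A : Finset (V × V)) (ν : Fin n ≃ V)
    (i : ℕ) : Finset (V × V) :=
  A.filter (fun a => (ν.symm a.1 : ℕ) < i ∨ (ν.symm a.2 : ℕ) < i)

/-- The dynamic-programming quantity `χ(E_i, φ, S)`: the minimum, over all tuples
`(A_1, ..., A_k)` of multisets of arcs of `γ(i)` satisfying conditions (1)-(4), of the
total weight `Σ_j Σ_{a ∈ A_j} ω(a)`; it is `∞` (`⊤` in `ℕ∞`) if no such tuple exists. -/
noncomputable def chi {V : Type} [Fintype V] [DecidableEq V] {n : ℕ}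
    (A : Finset (V × V)) (ω : V × V → ℕ) (b c k : ℕ) (ν : Fin n ≃ V)
    (i : ℕ) (φ : V × V → Fin k → ℕ) (S : Finset (Fin k)) : ℕ∞ :=
  sInf {ρ : ℕ∞ | ∃ M : Fin k → V × V → ℕ,
    -- the `M j` are multisets of arcs of γ(i)
    (∀ j a, M j a ≠ 0 → a ∈ gam A ν i) ∧
    -- (1) for every a ∈ E_i and j ∈ [k], A_j contains exactly φ(a,j) copies of a
    (∀ a ∈ Ebag A ν i, ∀ j, M j a = φ a j) ∧
    -- (2) every arc of γ(i) occurs between b and c times in A_1 ∪ ... ∪ A_k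
    (∀ a ∈ gam A ν i, b ≤ (∑ j, M j a) ∧ (∑ j, M j a) ≤ c) ∧
    -- (3) for every h ≤ i and j ∈ S, v_h is balanced in A_j
    (∀ h : Fin n, (h : ℕ) < i → ∀ j ∈ S,
      (∑ u, M j (u, ν h)) = ∑ u, M j (ν h, u)) ∧
    -- (4) A_j is non-empty iff j ∈ S
    (∀ j, (∃ a, M j a ≠ 0) ↔ j ∈ S) ∧
    -- (5) ρ is the total weight
    (ρ = ((∑ j, ∑ a, M j a * ω a : ℕ) : ℕ∞))}

/-!
The multiplicities of `k` closed walks are `k` nonzero circulations, which gives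
`χ ≤` the weight of every solution. Conversely, every nonzero circulation contains a closed walk
and hence splits into closed walks. When `b = 0` one closed walk inside each part is a solution
of no larger weight. When `b ≥ 1` every arc is used, so splitting all `k` parts gives at least
`k` closed walks covering a connected digraph; two of them share a vertex as long as there are
more than `k`, and can then be spliced into one, until exactly `k` walks with the same total
arc multiplicities, hence the same weight, remain.
-/

open Finset

theorem Multiset.exists_univ_map_eq {α : Type} (s : Multiset α) {k : ℕ}
    (hk : Multiset.card s = k) : ∃ W : Fin k → α, univ.val.map W = s := by
  subst hk
  refine ⟨fun i => s.toList.get (i.cast (by simp)), ?_⟩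
  rw [Fin.univ_val_map]
  conv_rhs => rw [← Multiset.coe_toList s]
  congr 1
  exact List.ext_get (by simp) fun i _ _ => by simp

section ClosedWalk

variable {V : Type} {A : Finset (V × V)}

theorem head_fst_cons_map_snd {L : List (V × V)} (hL : L ≠ [])
    (h : L.IsChain (fun p q => p.2 = q.1)) :
    (L.head hL).1 :: L.map Prod.snd = L.map Prod.fst ++ [(L.getLast hL).2] := by
  induction L with
  | nil => contradiction
  | cons a T ih =>
    cases T with
    | nil => simp
    | cons b T' =>
      obtain ⟨hab, h'⟩ := List.isChain_cons_cons.1 h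
      simpa [hab] using ih (List.cons_ne_nil _ _) h'

theorem count_map_fst_lt_count_map_snd [DecidableEq V] {L : List (V × V)} (hL : L ≠ [])
    (hchain : L.IsChain (fun p q => p.2 = q.1)) (hopen : (L.getLast hL).2 ≠ (L.head hL).1) :
    (L.map Prod.fst).count (L.getLast hL).2 < (L.map Prod.snd).count (L.getLast hL).2 := by
  have key := congrArg (List.count (L.getLast hL).2) (head_fst_cons_map_snd hL hchain)
  simp only [List.count_cons, List.count_append] at key
  simp [Ne.symm hopen] at key
  omega

theorem isClosedWalk_iff_of_ne_nil {L : List (V × V)} (hL : L ≠ []) :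
    IsClosedWalk A L ↔ (∀ a ∈ L, a ∈ A) ∧ L.IsChain (fun p q => p.2 = q.1) ∧
      (L.getLast hL).2 = (L.head hL).1 := by
  simp only [IsClosedWalk, List.getLast?_eq_some_getLast hL, List.head?_eq_some_head hL,
    Option.map_some, Option.some_inj]
  rfl

theorem IsClosedWalk.map_snd_perm_map_fst {L : List (V × V)} (h : IsClosedWalk A L) :
    (L.map Prod.snd).Perm (L.map Prod.fst) := by
  rcases eq_or_ne L [] with rfl | hL
  · simp
  obtain ⟨-, hchain, hclosed⟩ := (isClosedWalk_iff_of_ne_nil hL).1 h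
  have key := head_fst_cons_map_snd hL hchain
  rw [hclosed] at key
  have : ((L.head hL).1 :: L.map Prod.snd).Perm ((L.head hL).1 :: L.map Prod.fst) := by
    rw [key]; exact List.perm_append_singleton _ _
  exact this.cons_inv

theorem IsClosedWalk.append_comm {P Q : List (V × V)} (h : IsClosedWalk A (P ++ Q)) :
    IsClosedWalk A (Q ++ P) := by
  rcases eq_or_ne P [] with rfl | hP
  · simpa using h
  rcases eq_or_ne Q [] with rfl | hQ
  · simpa using h
  obtain ⟨hmem, hchain, hclosed⟩ := h
  obtain ⟨hchainP, hchainQ, hlink⟩ := List.isChain_append.1 hchain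
  rw [List.getLast?_append_of_ne_nil _ hQ, List.head?_append_of_ne_nil _ hP] at hclosed
  refine ⟨fun a ha => hmem a (List.mem_append.2 (List.mem_append.1 ha).symm),
    List.isChain_append.2 ⟨hchainQ, hchainP, ?_⟩, ?_⟩
  · simp only [List.getLast?_eq_some_getLast hQ, List.head?_eq_some_head hP, Option.map_some,
      Option.some_inj] at hclosed
    simpa [List.getLast?_eq_some_getLast hQ, List.head?_eq_some_head hP] using hclosed
  · rw [List.getLast?_append_of_ne_nil _ hP, List.head?_append_of_ne_nil _ hQ]
    simpa [List.getLast?_eq_some_getLast hP, List.head?_eq_some_head hQ] using hlink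

theorem IsClosedWalk.exists_perm_cons {L : List (V × V)} (h : IsClosedWalk A L) {v : V}
    (hv : v ∈ L.map Prod.fst) :
    ∃ a L', a.1 = v ∧ IsClosedWalk A (a :: L') ∧ (a :: L').Perm L := by
  obtain ⟨a, ha, rfl⟩ := List.mem_map.1 hv
  obtain ⟨s, t, rfl⟩ := List.append_of_mem ha
  exact ⟨a, t ++ s, rfl, h.append_comm, List.perm_append_comm (l₁ := a :: t)⟩

theorem IsClosedWalk.cons_append_cons {a b : V × V} {P Q : List (V × V)}
    (hP : IsClosedWalk A (a :: P)) (hQ : IsClosedWalk A (b :: Q)) (hab : a.1 = b.1) :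
    IsClosedWalk A (a :: P ++ b :: Q) := by
  rw [isClosedWalk_iff_of_ne_nil (List.cons_ne_nil _ _)] at hP hQ
  rw [isClosedWalk_iff_of_ne_nil (by simp)]
  obtain ⟨hmemP, hchainP, hclosedP⟩ := hP
  obtain ⟨hmemQ, hchainQ, hclosedQ⟩ := hQ
  refine ⟨fun x hx => (List.mem_append.1 hx).elim (hmemP x) (hmemQ x),
    List.isChain_append.2 ⟨hchainP, hchainQ, ?_⟩, ?_⟩
  · simp_all [List.getLast?_eq_some_getLast]
  · simp_all [List.getLast_append_of_ne_nil]

theorem IsClosedWalk.exists_perm_append {L₁ L₂ : List (V × V)} (h₁ : IsClosedWalk A L₁)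
    (h₂ : IsClosedWalk A L₂) {v : V} (hv₁ : v ∈ L₁.map Prod.fst)
    (hv₂ : v ∈ L₂.map Prod.fst) :
    ∃ L, IsClosedWalk A L ∧ L.Perm (L₁ ++ L₂) := by
  obtain ⟨a, P, ha, hP, hPL⟩ := h₁.exists_perm_cons hv₁
  obtain ⟨b, Q, hb, hQ, hQL⟩ := h₂.exists_perm_cons hv₂
  exact ⟨_, hP.cons_append_cons hQ (ha.trans hb.symm), hPL.append hQL⟩

theorem IsClosedWalk.snd_mem_map_fst {L : List (V × V)} (h : IsClosedWalk A L) {a : V × V}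
    (ha : a ∈ L) : a.2 ∈ L.map Prod.fst :=
  h.map_snd_perm_map_fst.subset (List.mem_map_of_mem ha)

end ClosedWalk

section Circulation

variable {V : Type} [Fintype V]

def IsCirculation (m : V × V → ℕ) : Prop :=
  ∀ v, ∑ u, m (u, v) = ∑ u, m (v, u)

theorem IsCirculation.tsub {m n : V × V → ℕ} (hm : IsCirculation m) (hn : IsCirculation n)
    (hnm : ∀ a, n a ≤ m a) : IsCirculation (fun a => m a - n a) := by
  intro v
  rw [Finset.sum_tsub_distrib _ fun u _ => hnm (u, v),
    Finset.sum_tsub_distrib _ fun u _ => hnm (v, u), hm v, hn v]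

end Circulation

section ArcCounts

variable {V : Type} [Fintype V] [DecidableEq V] {A : Finset (V × V)}

theorem sum_count_mk_left (L : List (V × V)) (v : V) :
    ∑ u, L.count (v, u) = (L.map Prod.fst).count v := by
  induction L with
  | nil => simp
  | cons a T ih =>
    obtain ⟨x, y⟩ := a
    by_cases hx : x = v <;> simp [List.count_cons, Finset.sum_add_distrib, ih, hx]

theorem sum_count_mk_right (L : List (V × V)) (v : V) :
    ∑ u, L.count (u, v) = (L.map Prod.snd).count v := by
  induction L with
  | nil => simp
  | cons a T ih =>
    obtain ⟨x, y⟩ := a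
    by_cases hy : y = v <;> simp [List.count_cons, Finset.sum_add_distrib, ih, hy]

theorem IsClosedWalk.sum_count_in_eq_out {L : List (V × V)} (h : IsClosedWalk A L) (v : V) :
    ∑ u, L.count (u, v) = ∑ u, L.count (v, u) := by
  rw [sum_count_mk_left, sum_count_mk_right, h.map_snd_perm_map_fst.count_eq]

theorem sum_count_eq_length (L : List (V × V)) : ∑ a, L.count a = L.length := by
  induction L with
  | nil => simp
  | cons x T ih => simp [List.count_cons, Finset.sum_add_distrib, ih]

theorem sum_count_mul_eq_sum_map (ω : V × V → ℕ) (L : List (V × V)) :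
    ∑ a, L.count a * ω a = (L.map ω).sum := by
  induction L with
  | nil => simp
  | cons x T ih => simp [List.count_cons, Finset.sum_add_distrib, add_mul, ih, add_comm]

theorem kWalkWeight_eq_sum_count (ω : V × V → ℕ) {k : ℕ} (W : Fin k → List (V × V)) :
    kWalkWeight ω W = ∑ a, (∑ i, (W i).count a) * ω a := by
  simp only [kWalkWeight, walkWeight, ← sum_count_mul_eq_sum_map, Finset.sum_mul]
  exact Finset.sum_comm

/-- A trail inside a circulation can be extended until it closes up: the end vertex of an open
trail has more incoming than outgoing trail arcs, so by balance some outgoing arc of the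
circulation is not yet used up. -/
theorem IsCirculation.exists_closedWalk_of_isChain {m : V × V → ℕ} (hm : IsCirculation m)
    (hA : ∀ a, m a ≠ 0 → a ∈ A) (L : List (V × V)) (hL : L ≠ [])
    (hchain : L.IsChain (fun p q => p.2 = q.1)) (hle : ∀ a, L.count a ≤ m a) :
    ∃ C, C ≠ [] ∧ IsClosedWalk A C ∧ ∀ a, C.count a ≤ m a := by
  by_cases hclosed : (L.getLast hL).2 = (L.head hL).1
  · refine ⟨L, hL, (isClosedWalk_iff_of_ne_nil hL).2 ⟨fun a ha => hA a ?_, hchain, hclosed⟩,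
      hle⟩
    have := List.count_pos_iff.2 ha
    have := hle a
    omega
  set z := (L.getLast hL).2
  have hout : ∑ u, L.count (z, u) < ∑ u, m (z, u) :=
    calc ∑ u, L.count (z, u) < ∑ u, L.count (u, z) := by
          rw [sum_count_mk_left, sum_count_mk_right]
          exact count_map_fst_lt_count_map_snd hL hchain hclosed
      _ ≤ ∑ u, m (u, z) := Finset.sum_le_sum fun u _ => hle (u, z)
      _ = ∑ u, m (z, u) := hm z
  obtain ⟨w, -, hw⟩ := Finset.exists_lt_of_sum_lt hout
  have hle' : ∀ a, (L ++ [(z, w)]).count a ≤ m a := by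
    intro a
    rcases eq_or_ne a (z, w) with rfl | hne
    · simpa [List.count_append] using hw
    · simpa [List.count_append, List.count_singleton, Ne.symm hne] using hle a
  have hlen : (L ++ [(z, w)]).length ≤ ∑ a, m a := by
    rw [← sum_count_eq_length]
    exact Finset.sum_le_sum fun a _ => hle' a
  refine hm.exists_closedWalk_of_isChain hA (L ++ [(z, w)]) (by simp) ?_ hle'
  exact List.isChain_append.2 ⟨hchain, List.isChain_singleton _, by
    simp [List.getLast?_eq_some_getLast hL, z]⟩
termination_by (∑ a, m a) - L.length
decreasing_by simp only [List.length_append, List.length_singleton] at hlen ⊢; omega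

theorem IsCirculation.exists_closedWalk_le {m : V × V → ℕ} (hm : IsCirculation m)
    (hA : ∀ a, m a ≠ 0 → a ∈ A) {a₀ : V × V} (ha₀ : m a₀ ≠ 0) :
    ∃ C, C ≠ [] ∧ IsClosedWalk A C ∧ ∀ a, C.count a ≤ m a :=
  hm.exists_closedWalk_of_isChain hA [a₀] (List.cons_ne_nil _ _) (List.isChain_singleton _)
    fun a => by
      rcases eq_or_ne a a₀ with rfl | hne
      · simpa using Nat.one_le_iff_ne_zero.2 ha₀
      · simp [Ne.symm hne]

end ArcCounts

section ClosedWalkDecomposition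

variable {V : Type} [DecidableEq V] {A : Finset (V × V)}

def IsClosedWalkDecomposition (A : Finset (V × V)) (ws : Multiset (List (V × V)))
    (m : V × V → ℕ) : Prop :=
  (∀ C ∈ ws, C ≠ [] ∧ IsClosedWalk A C) ∧ ∀ a, (ws.map (List.count a)).sum = m a

theorem IsClosedWalkDecomposition.exists_mem {ws : Multiset (List (V × V))}
    {m : V × V → ℕ} (h : IsClosedWalkDecomposition A ws m) {a : V × V} (ha : m a ≠ 0) :
    ∃ C ∈ ws, a ∈ C := by
  by_contra! hnone
  rw [← h.2 a] at ha
  refine ha (Multiset.sum_eq_zero_iff.2 fun x hx => ?_)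
  obtain ⟨C, hC, rfl⟩ := Multiset.mem_map.1 hx
  exact List.count_eq_zero_of_not_mem (hnone C hC)

/-- Connectivity: if no other walk met `L₀`, a path in the underlying graph leaving the vertex
set of `L₀` would cross it along an arc, and the walk traversing that arc meets `L₀`. -/
theorem IsClosedWalkDecomposition.exists_shared_vertex {L₀ : List (V × V)}
    {rest : Multiset (List (V × V))} {m : V × V → ℕ}
    (h : IsClosedWalkDecomposition A (L₀ ::ₘ rest) m) (hcov : ∀ a ∈ A, m a ≠ 0)
    (hconn : (UGraph A).Connected) (hrest : rest ≠ 0) :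
    ∃ C ∈ rest, ∃ v, v ∈ L₀.map Prod.fst ∧ v ∈ C.map Prod.fst := by
  by_contra! hdisj
  obtain ⟨L₁, hL₁⟩ := Multiset.exists_mem_of_ne_zero hrest
  obtain ⟨a₀, ha₀⟩ := List.exists_mem_of_ne_nil _ (h.1 L₀ (Multiset.mem_cons_self _ _)).1
  obtain ⟨a₁, ha₁⟩ := List.exists_mem_of_ne_nil _ (h.1 L₁ (Multiset.mem_cons_of_mem hL₁)).1
  obtain ⟨p⟩ := hconn.preconnected a₀.1 a₁.1
  obtain ⟨d, -, hx, hy⟩ := p.exists_boundary_dart {v | v ∈ L₀.map Prod.fst}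
    (List.mem_map_of_mem ha₀) fun h₀ => hdisj L₁ hL₁ _ h₀ (List.mem_map_of_mem ha₁)
  have hmeet : ∀ a ∈ A, a = (d.fst, d.snd) ∨ a = (d.snd, d.fst) →
      ∃ C ∈ L₀ ::ₘ rest, d.fst ∈ C.map Prod.fst ∧ d.snd ∈ C.map Prod.fst := by
    intro a ha hd
    obtain ⟨C, hC, haC⟩ := h.exists_mem (hcov a ha)
    have h₁ := List.mem_map_of_mem (f := Prod.fst) haC
    have h₂ := (h.1 C hC).2.snd_mem_map_fst haC
    refine ⟨C, hC, ?_⟩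
    rcases hd with rfl | rfl <;> simp_all
  obtain ⟨-, harc⟩ := (SimpleGraph.fromRel_adj _ _ _).1 d.adj
  obtain ⟨C, hC, hxC, hyC⟩ := harc.elim (fun harc => hmeet _ harc (Or.inl rfl))
    (fun harc => hmeet _ harc (Or.inr rfl))
  rcases Multiset.mem_cons.1 hC with rfl | hC
  · exact hy hyC
  · exact hdisj C hC _ hx hxC

theorem IsClosedWalkDecomposition.exists_merge {L₁ L₂ : List (V × V)}
    {rest : Multiset (List (V × V))} {m : V × V → ℕ}
    (h : IsClosedWalkDecomposition A (L₁ ::ₘ L₂ ::ₘ rest) m) {v : V}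
    (hv₁ : v ∈ L₁.map Prod.fst) (hv₂ : v ∈ L₂.map Prod.fst) :
    ∃ L, IsClosedWalkDecomposition A (L ::ₘ rest) m := by
  obtain ⟨hne₁, h₁⟩ := h.1 L₁ (by simp)
  obtain ⟨L, hL, hperm⟩ := h₁.exists_perm_append (h.1 L₂ (by simp)).2 hv₁ hv₂
  refine ⟨L, ?_, fun a => ?_⟩
  · refine Multiset.forall_mem_cons.2 ⟨⟨fun hnil => ?_, hL⟩, fun C hC => h.1 C (by simp [hC])⟩
    simp [hnil, hne₁] at hperm
  · rw [← h.2 a]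
    simp [hperm.count_eq, List.count_append, add_assoc]

theorem IsClosedWalkDecomposition.exists_card_eq {ws : Multiset (List (V × V))}
    {m : V × V → ℕ} (h : IsClosedWalkDecomposition A ws m) (hcov : ∀ a ∈ A, m a ≠ 0)
    (hconn : (UGraph A).Connected) {k : ℕ} (hk : 1 ≤ k) (hkws : k ≤ Multiset.card ws) :
    ∃ ws', Multiset.card ws' = k ∧ IsClosedWalkDecomposition A ws' m := by
  rcases hkws.eq_or_lt with hkws | hkws
  · exact ⟨ws, hkws.symm, h⟩
  obtain ⟨L₁, hL₁⟩ := Multiset.card_pos_iff_exists_mem.1 (by omega : 0 < Multiset.card ws)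
  obtain ⟨rest, rfl⟩ := Multiset.exists_cons_of_mem hL₁
  obtain ⟨L₂, hL₂, v, hv₁, hv₂⟩ := h.exists_shared_vertex hcov hconn
    (by rintro rfl; simp at hkws; omega)
  obtain ⟨rest, rfl⟩ := Multiset.exists_cons_of_mem hL₂
  obtain ⟨L, hL⟩ := h.exists_merge hv₁ hv₂
  exact hL.exists_card_eq hcov hconn hk (by simp at hkws ⊢; omega)
termination_by Multiset.card ws
decreasing_by simp_all

end ClosedWalkDecomposition

section Realization

variable {V : Type} [Fintype V] [DecidableEq V] {A : Finset (V × V)}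

theorem IsCirculation.exists_isClosedWalkDecomposition {m : V × V → ℕ} (hm : IsCirculation m)
    (hA : ∀ a, m a ≠ 0 → a ∈ A) : ∃ ws, IsClosedWalkDecomposition A ws m := by
  by_cases hzero : ∀ a, m a = 0
  · exact ⟨0, by simp, fun a => by simp [hzero a]⟩
  push Not at hzero
  obtain ⟨a₀, ha₀⟩ := hzero
  obtain ⟨C, hCne, hC, hCle⟩ := hm.exists_closedWalk_le hA ha₀
  have hlt : ∑ a, (m a - C.count a) < ∑ a, m a := by
    obtain ⟨a, ha⟩ := List.exists_mem_of_ne_nil C hCne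
    refine Finset.sum_lt_sum (fun a _ => Nat.sub_le _ _) ⟨a, mem_univ a, ?_⟩
    have := List.count_pos_iff.2 ha
    have := hCle a
    omega
  have hrest : IsCirculation (fun a => m a - C.count a) := hm.tsub hC.sum_count_in_eq_out hCle
  obtain ⟨ws, hws, hcount⟩ := hrest.exists_isClosedWalkDecomposition fun a ha => hA a (by omega)
  refine ⟨C ::ₘ ws, ?_, fun a => ?_⟩
  · simpa [hCne, hC] using hws
  · have := hCle a
    simp only [Multiset.map_cons, Multiset.sum_cons, hcount a]
    omega
termination_by ∑ a, m a

theorem exists_isClosedWalkDecomposition_sum {k : ℕ} {M : Fin k → V × V → ℕ}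
    (hA : ∀ j a, M j a ≠ 0 → a ∈ A) (hcirc : ∀ j, IsCirculation (M j))
    (hne : ∀ j, ∃ a, M j a ≠ 0) :
    ∃ ws, k ≤ Multiset.card ws ∧ IsClosedWalkDecomposition A ws (fun a => ∑ j, M j a) := by
  choose ws hws using fun j => (hcirc j).exists_isClosedWalkDecomposition (hA j)
  have hcard : ∀ j, 1 ≤ Multiset.card (ws j) := fun j => by
    obtain ⟨a, ha⟩ := hne j
    obtain ⟨C, hC, -⟩ := (hws j).exists_mem ha
    exact Multiset.card_pos_iff_exists_mem.2 ⟨C, hC⟩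
  refine ⟨∑ j, ws j, ?_, fun C hC => ?_, fun a => ?_⟩
  · simpa using Finset.sum_le_sum fun j (_ : j ∈ univ) => hcard j
  · obtain ⟨j, -, hCj⟩ := Multiset.mem_sum.1 hC
    exact (hws j).1 C hCj
  · simp_rw [← (hws _).2 a]
    exact map_sum (Multiset.sumAddMonoidHom.comp (Multiset.mapAddMonoidHom _)) ws univ

theorem exists_closedWalks_count_eq (hconn : (UGraph A).Connected) {k : ℕ} (hk : 1 ≤ k)
    {M : Fin k → V × V → ℕ} (hA : ∀ j a, M j a ≠ 0 → a ∈ A)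
    (hcirc : ∀ j, IsCirculation (M j)) (hne : ∀ j, ∃ a, M j a ≠ 0)
    (hcov : ∀ a ∈ A, ∑ j, M j a ≠ 0) :
    ∃ W : Fin k → List (V × V), (∀ i, W i ≠ [] ∧ IsClosedWalk A (W i)) ∧
      ∀ a, ∑ i, (W i).count a = ∑ j, M j a := by
  obtain ⟨ws, hcard, hws⟩ := exists_isClosedWalkDecomposition_sum hA hcirc hne
  obtain ⟨ws, hcard, hws⟩ := hws.exists_card_eq hcov hconn hk hcard
  obtain ⟨W, rfl⟩ := ws.exists_univ_map_eq hcard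
  refine ⟨W, fun i => hws.1 _ (Multiset.mem_map_of_mem _ (mem_univ_val i)), fun a => ?_⟩
  have hcount := hws.2 a
  rw [Multiset.map_map] at hcount
  exact hcount

theorem exists_isDWCP_kWalkWeight_le (hconn : (UGraph A).Connected) (ω : V × V → ℕ)
    {b c k : ℕ} (hk : 1 ≤ k) {M : Fin k → V × V → ℕ} (hA : ∀ j a, M j a ≠ 0 → a ∈ A)
    (hbnd : ∀ a ∈ A, b ≤ ∑ j, M j a ∧ ∑ j, M j a ≤ c) (hcirc : ∀ j, IsCirculation (M j))
    (hne : ∀ j, ∃ a, M j a ≠ 0) :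
    ∃ W, IsDWCP A b c k W ∧ kWalkWeight ω W ≤ ∑ j, ∑ a, M j a * ω a := by
  obtain ⟨W, hW, hle, hge⟩ : ∃ W : Fin k → List (V × V),
      (∀ i, W i ≠ [] ∧ IsClosedWalk A (W i)) ∧ (∀ a, ∑ i, (W i).count a ≤ ∑ j, M j a) ∧
        ∀ a ∈ A, b ≤ ∑ i, (W i).count a := by
    rcases Nat.eq_zero_or_pos b with rfl | hb
    · choose W hWne hW hWle using fun j => (hcirc j).exists_closedWalk_le (hA j) (hne j).choose_spec
      exact ⟨W, fun i => ⟨hWne i, hW i⟩, fun a => Finset.sum_le_sum fun j _ => hWle j a,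
        fun _ _ => Nat.zero_le _⟩
    · obtain ⟨W, hW, hcount⟩ := exists_closedWalks_count_eq hconn hk hA hcirc hne
        fun a ha => (Nat.lt_of_lt_of_le hb (hbnd a ha).1).ne'
      exact ⟨W, hW, fun a => (hcount a).le, fun a ha => hcount a ▸ (hbnd a ha).1⟩
  refine ⟨W, ⟨hW, fun a ha => ⟨hge a ha, (hle a).trans (hbnd a ha).2⟩⟩, ?_⟩
  calc kWalkWeight ω W = ∑ a, (∑ i, (W i).count a) * ω a := kWalkWeight_eq_sum_count ω W
    _ ≤ ∑ a, (∑ j, M j a) * ω a := Finset.sum_le_sum fun a _ => Nat.mul_le_mul_right _ (hle a)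
    _ = ∑ j, ∑ a, M j a * ω a := by simp_rw [Finset.sum_mul]; exact Finset.sum_comm

end Realization

section Chi

variable {V : Type} [DecidableEq V] {n : ℕ} (A : Finset (V × V)) (ν : Fin n ≃ V)

theorem Ebag_last_eq_empty : Ebag A ν n = ∅ :=
  Finset.filter_false_of_mem fun a _ => by
    have := (ν.symm a.1).is_lt
    have := (ν.symm a.2).is_lt
    omega

theorem gam_last_eq : gam A ν n = A :=
  Finset.filter_true_of_mem fun a _ => Or.inl (ν.symm a.1).is_lt

end Chi

theorem chi_last_le_kWalkWeight {V : Type} [Fintype V] [DecidableEq V] {A : Finset (V × V)}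
    (ω : V × V → ℕ) {b c k n : ℕ} (ν : Fin n ≃ V) {W : Fin k → List (V × V)}
    (hW : IsDWCP A b c k W) :
    chi A ω b c k ν n (fun _ _ => 0) univ ≤ kWalkWeight ω W := by
  refine sInf_le ⟨fun j a => (W j).count a, fun j a ha => ?_, ?_, ?_, ?_, fun j => ?_, ?_⟩
  · rw [gam_last_eq]
    exact (hW.1 j).2.1 a (List.count_pos_iff.1 (Nat.pos_of_ne_zero ha))
  · simp [Ebag_last_eq_empty]
  · simpa [gam_last_eq] using hW.2
  · exact fun h _ j _ => (hW.1 j).2.sum_count_in_eq_out (ν h)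
  · obtain ⟨a, ha⟩ := List.exists_mem_of_ne_nil _ (hW.1 j).1
    exact iff_of_true ⟨a, (List.count_pos_iff.2 ha).ne'⟩ (mem_univ j)
  · rw [kWalkWeight_eq_sum_count]
    simp_rw [Finset.sum_mul]
    exact congrArg _ Finset.sum_comm

theorem stmt11_general {V : Type} [Fintype V] [DecidableEq V] (A : Finset (V × V))
    (ω : V × V → ℕ) (hconn : (UGraph A).Connected)
    (b c k : ℕ) (hk : 1 ≤ k)
    (n : ℕ) (ν : Fin n ≃ V) :
    chi A ω b c k ν n (fun _ _ => 0) Finset.univ =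
      sInf {ρ : ℕ∞ | ∃ W : Fin k → List (V × V),
        IsDWCP A b c k W ∧ ρ = (kWalkWeight ω W : ℕ∞)} := by
  refine le_antisymm (le_sInf ?_) (le_sInf ?_)
  · rintro _ ⟨W, hW, rfl⟩
    exact chi_last_le_kWalkWeight ω ν hW
  · rintro _ ⟨M, hA, -, hbnd, hbal, hne, rfl⟩
    rw [gam_last_eq] at hA hbnd
    have hcirc : ∀ j, IsCirculation (M j) := fun j v => by
      simpa using hbal (ν.symm v) (ν.symm v).is_lt j (mem_univ j)
    obtain ⟨W, hW, hle⟩ := exists_isDWCP_kWalkWeight_le hconn ω hk hA hbnd hcirc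
      fun j => (hne j).2 (mem_univ j)
    calc sInf _ ≤ (kWalkWeight ω W : ℕ∞) := sInf_le (by exact ⟨W, hW, rfl⟩)
      _ ≤ _ := by exact_mod_cast hle

theorem stmt11 {V : Type} [Fintype V] [DecidableEq V] (A : Finset (V × V))
    (ω : V × V → ℕ) (hloop : ∀ v : V, (v, v) ∉ A) (hconn : (UGraph A).Connected)
    (b c k : ℕ) (hbc : b ≤ c) (hk : 1 ≤ k)
    (n : ℕ) (ν : Fin n ≃ V) :
    chi A ω b c k ν n (fun _ _ => 0) Finset.univ =
      sInf {ρ : ℕ∞ | ∃ W : Fin k → List (V × V),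
        IsDWCP A b c k W ∧ ρ = (kWalkWeight ω W : ℕ∞)} :=
  stmt11_general A ω hconn b c k hk n ν
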